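/- arXiv:2605.02211 — 6 statements merged into one kernel-verified Lean document; each statement's English description precedes it below -/
import Mathlib

section
/- Let M ∈ ℂ^{2^r × 2^r} be a nonzero Hermitian positive semidefinite matrix that is not of full rank. Then for every n and every α > 0, there exist m = ⌊n/r⌋ pairwise disjoint r-subsets T_1,…,T_m of [n] and unit vectors ψ_1,…,ψ_m ∈ ℂ^{2^n} such that ⟨ψ_i, (M|_{T_i} ⊗ Id)ψ_i⟩ > 0 while ⟨ψ_i, (M|_{T_j} ⊗ Id)ψ_i⟩ = 0 for all j ≠ i. Consequently the non-redundancy NRD(M, n) is at least ⌊n/r⌋. -/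
/-!
Pick a unit vector `v` with `⟨v, M v⟩ > 0` (possible as `M ≠ 0` is positive semidefinite) and a
unit vector `w` in the kernel of `M` (possible as `M` is singular). Split the first `⌊n/r⌋ r`
qubits into consecutive blocks `T_1, …, T_m` and let `ψ_i` be the product state carrying `v` on
`T_i`, `w` on every other block and `|0⟩` on the leftover qubits. A local term acts on a product
state only through its own block, so `⟨ψ_i, M_{T_j} ψ_i⟩` is `⟨v, M v⟩` for `j = i` and
`⟨w, M w⟩ = 0` otherwise, the other factors being norms of unit vectors.
-/

open scoped Classical ComplexOrder
open Matrix

/-- The local operator `M|_T ⊗ Id`: the predicate matrix `M` (indexed by bit strings of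
length `r`) acting on the qubits `T 0, …, T (r-1)` of an `n`-qubit system, and as the
identity on the remaining qubits. -/
noncomputable def localOp {n r : ℕ} (M : Matrix (Fin r → Fin 2) (Fin r → Fin 2) ℂ)
    (T : Fin r → Fin n) : Matrix (Fin n → Fin 2) (Fin n → Fin 2) ℂ :=
  Matrix.of fun x y =>
    if ∀ i : Fin n, i ∉ Set.range T → x i = y i then M (x ∘ T) (y ∘ T) else 0

section Vectors

variable {d : Type*} [Fintype d]

lemma exists_pos_smul_star_dotProduct_self_eq_one {x : d → ℂ} (hx : x ≠ 0) :
    ∃ t : ℝ, 0 < t ∧ star ((t : ℂ) • x) ⬝ᵥ ((t : ℂ) • x) = 1 := by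
  obtain ⟨s, hs, hsx⟩ := RCLike.pos_iff_exists_ofReal.mp (dotProduct_star_self_pos_iff.mpr hx)
  refine ⟨(Real.sqrt s)⁻¹, by positivity, ?_⟩
  have hinv : (Real.sqrt s)⁻¹ * (Real.sqrt s)⁻¹ * s = 1 := by
    rw [← mul_inv, Real.mul_self_sqrt hs.le, inv_mul_cancel₀ hs.ne']
  rw [star_smul, smul_dotProduct, dotProduct_smul, ← hsx, Complex.star_def, Complex.conj_ofReal,
    smul_eq_mul, smul_eq_mul, ← mul_assoc]
  simpa using congrArg ((↑) : ℝ → ℂ) hinv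

lemma Matrix.PosSemidef.exists_star_dotProduct_self_eq_one_and_re_pos {M : Matrix d d ℂ}
    (hM : M.PosSemidef) (hne : M ≠ 0) :
    ∃ v : d → ℂ, star v ⬝ᵥ v = 1 ∧ 0 < (star v ⬝ᵥ M *ᵥ v).re := by
  obtain ⟨x, hMx⟩ : ∃ x, M *ᵥ x ≠ 0 := by
    by_contra! h
    exact hne (mulVec_injective (funext fun x => by simp [h x]))
  have hx : x ≠ 0 := by rintro rfl; simp at hMx
  obtain ⟨t, ht, hunit⟩ := exists_pos_smul_star_dotProduct_self_eq_one hx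
  have hMtx : M *ᵥ ((t : ℂ) • x) ≠ 0 := by
    rw [mulVec_smul]
    exact smul_ne_zero (by exact_mod_cast ht.ne') hMx
  refine ⟨(t : ℂ) • x, hunit, (Complex.pos_iff.mp ?_).1⟩
  exact lt_of_le_of_ne (hM.dotProduct_mulVec_nonneg _)
    (Ne.symm ((hM.dotProduct_mulVec_zero_iff _).not.mpr hMtx))

lemma exists_star_dotProduct_self_eq_one_and_mulVec_eq_zero {M : Matrix d d ℂ}
    (hM : M.rank < Fintype.card d) : ∃ w : d → ℂ, star w ⬝ᵥ w = 1 ∧ M *ᵥ w = 0 := by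
  obtain ⟨x, hx, hMx⟩ := exists_mulVec_eq_zero_iff.mpr
    (not_not.mp fun h => hM.ne (rank_of_det_ne_zero h))
  obtain ⟨t, -, hunit⟩ := exists_pos_smul_star_dotProduct_self_eq_one hx
  exact ⟨(t : ℂ) • x, hunit, by rw [mulVec_smul, hMx, smul_zero]⟩

end Vectors

section Functions

variable {α β γ : Type*}

lemma Function.Injective.extend_comp_eq_of_forall_notMem_range {f : α → β} (hf : f.Injective)
    {e y : β → γ} (h : ∀ b ∉ Set.range f, e b = y b) : Function.extend f (y ∘ f) e = y :=
  funext fun b => by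
    by_cases hb : b ∈ Set.range f
    · obtain ⟨a, rfl⟩ := hb
      exact hf.extend_apply _ _ a
    · exact (Function.extend_apply' _ _ b hb).trans (h b hb)

variable {f : α → β → γ}

lemma injective_of_injective_uncurry (hf : (Function.uncurry f).Injective) (a : α) :
    (f a).Injective := fun _ _ h => congrArg Prod.snd (@hf (a, _) (a, _) h)

lemma disjoint_range_of_injective_uncurry (hf : (Function.uncurry f).Injective) {a a' : α}
    (h : a ≠ a') : Disjoint (Set.range (f a)) (Set.range (f a')) := by
  rw [Set.disjoint_left]
  rintro _ ⟨b, rfl⟩ ⟨b', hb'⟩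
  exact h (congrArg Prod.fst (@hf (a', b') (a, b) hb')).symm

end Functions

section LocalOp

variable {n r : ℕ} {T : Fin r → Fin n}

-- `Function.extend T u x` is `x` with the qubits of `T` overwritten by `u`: these are the only
-- strings that `localOp M T` connects to `x`.
lemma localOp_mulVec_apply (hT : T.Injective) (M : Matrix (Fin r → Fin 2) (Fin r → Fin 2) ℂ)
    (v : (Fin n → Fin 2) → ℂ) (x : Fin n → Fin 2) :
    (localOp M T *ᵥ v) x = ∑ u, M (x ∘ T) u * v (Function.extend T u x) := by
  refine (Fintype.sum_of_injective (fun u => Function.extend T u x)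
    (Function.extend_injective hT x) _ (fun y => localOp M T x y * v y) ?_ ?_).symm
  · intro y hy
    have hdiff : ¬ ∀ q ∉ Set.range T, x q = y q := fun h =>
      hy ⟨y ∘ T, hT.extend_comp_eq_of_forall_notMem_range h⟩
    simp only [localOp, of_apply, if_neg hdiff, zero_mul]
  · intro u
    have hagree : ∀ q ∉ Set.range T, x q = Function.extend T u x q := fun q hq =>
      (Function.extend_apply' u x q hq).symm
    simp only [localOp, of_apply, if_pos hagree, Function.extend_comp hT]

end LocalOp

section ProductState

variable {n m r : ℕ} {T : Fin m → Fin r → Fin n}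

noncomputable def fillBlocks (T : Fin m → Fin r → Fin n) (a : Fin m → Fin r → Fin 2) :
    Fin n → Fin 2 :=
  Function.extend (Function.uncurry T) (Function.uncurry a) 0

/-- The product state with `c j` on the block `T j` and every qubit outside the blocks in `|0⟩`;
its support is the range of `fillBlocks T`. -/
noncomputable def productState (T : Fin m → Fin r → Fin n) (c : Fin m → (Fin r → Fin 2) → ℂ) :
    (Fin n → Fin 2) → ℂ :=
  fun x => if x ∈ Set.range (fillBlocks T) then ∏ j, c j (x ∘ T j) else 0

lemma fillBlocks_comp (hT : (Function.uncurry T).Injective) (a : Fin m → Fin r → Fin 2)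
    (j : Fin m) : fillBlocks T a ∘ T j = a j :=
  funext fun k => hT.extend_apply (Function.uncurry a) 0 (j, k)

lemma fillBlocks_injective (hT : (Function.uncurry T).Injective) :
    (fillBlocks T).Injective := fun a b h => funext fun j => by
  rw [← fillBlocks_comp hT a j, h, fillBlocks_comp hT]

lemma fillBlocks_apply_of_notMem (a : Fin m → Fin r → Fin 2) {q : Fin n}
    (hq : q ∉ Set.range (Function.uncurry T)) : fillBlocks T a q = 0 :=
  Function.extend_apply' _ _ q hq

lemma mem_range_fillBlocks (hT : (Function.uncurry T).Injective) {x : Fin n → Fin 2} :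
    x ∈ Set.range (fillBlocks T) ↔ ∀ q ∉ Set.range (Function.uncurry T), x q = 0 := by
  refine ⟨?_, fun hx => ⟨fun j => x ∘ T j,
    hT.extend_comp_eq_of_forall_notMem_range fun q hq => (hx q hq).symm⟩⟩
  rintro ⟨a, rfl⟩ q hq
  exact fillBlocks_apply_of_notMem a hq

lemma extend_fillBlocks (hT : (Function.uncurry T).Injective) (a : Fin m → Fin r → Fin 2)
    (k : Fin m) (u : Fin r → Fin 2) :
    Function.extend (T k) u (fillBlocks T a) = fillBlocks T (Function.update a k u) := by
  funext q
  by_cases hq : q ∈ Set.range (Function.uncurry T)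
  · obtain ⟨⟨j, l⟩, rfl⟩ := hq
    have hfill (b : Fin m → Fin r → Fin 2) : fillBlocks T b (T j l) = b j l :=
      congrFun (fillBlocks_comp hT b j) l
    rw [Function.uncurry_apply_pair, hfill]
    by_cases hj : j = k
    · subst hj
      rw [(injective_of_injective_uncurry hT j).extend_apply, Function.update_self]
    · have hl : T j l ∉ Set.range (T k) :=
        Set.disjoint_left.mp (disjoint_range_of_injective_uncurry hT hj) ⟨l, rfl⟩
      rw [Function.extend_apply' _ _ _ hl, hfill, Function.update_of_ne hj]
  · have hqk : q ∉ Set.range (T k) := fun ⟨l, hl⟩ => hq ⟨(k, l), hl⟩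
    rw [Function.extend_apply' _ _ _ hqk, fillBlocks_apply_of_notMem _ hq,
      fillBlocks_apply_of_notMem _ hq]

lemma extend_notMem_range_fillBlocks (hT : (Function.uncurry T).Injective) (k : Fin m)
    (u : Fin r → Fin 2) {x : Fin n → Fin 2} (hx : x ∉ Set.range (fillBlocks T)) :
    Function.extend (T k) u x ∉ Set.range (fillBlocks T) := by
  rw [mem_range_fillBlocks hT] at hx ⊢
  push Not at hx ⊢
  obtain ⟨q, hq, hxq⟩ := hx
  refine ⟨q, hq, ?_⟩
  rwa [Function.extend_apply']
  rintro ⟨l, rfl⟩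
  exact hq ⟨(k, l), rfl⟩

lemma productState_fillBlocks (hT : (Function.uncurry T).Injective)
    (c : Fin m → (Fin r → Fin 2) → ℂ) (a : Fin m → Fin r → Fin 2) :
    productState T c (fillBlocks T a) = ∏ j, c j (a j) := by
  simp only [productState, Set.mem_range_self, if_true, fillBlocks_comp hT]

lemma productState_of_notMem (c : Fin m → (Fin r → Fin 2) → ℂ) {x : Fin n → Fin 2}
    (hx : x ∉ Set.range (fillBlocks T)) : productState T c x = 0 :=
  if_neg hx

lemma star_productState_dotProduct (hT : (Function.uncurry T).Injective)
    (c d : Fin m → (Fin r → Fin 2) → ℂ) :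
    star (productState T c) ⬝ᵥ productState T d = ∏ j, star (c j) ⬝ᵥ d j := by
  have hsum := Fintype.sum_of_injective (fillBlocks T) (fillBlocks_injective hT)
    (fun a => ∏ j, star (c j (a j)) * d j (a j))
    (fun x => star (productState T c x) * productState T d x)
    (fun x hx => by simp only [productState_of_notMem d hx, mul_zero])
    (fun a => by simp only [productState_fillBlocks hT, star_prod, Finset.prod_mul_distrib])
  simp only [dotProduct, Pi.star_apply, ← hsum, Fintype.prod_sum]

lemma localOp_mulVec_productState (hT : (Function.uncurry T).Injective)
    (M : Matrix (Fin r → Fin 2) (Fin r → Fin 2) ℂ) (c : Fin m → (Fin r → Fin 2) → ℂ) (k : Fin m) :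
    localOp M (T k) *ᵥ productState T c = productState T (Function.update c k (M *ᵥ c k)) := by
  funext x
  rw [localOp_mulVec_apply (injective_of_injective_uncurry hT k)]
  by_cases hx : x ∈ Set.range (fillBlocks T)
  · obtain ⟨a, rfl⟩ := hx
    set P := ∏ j ∈ {k}ᶜ, c j (a j)
    have hprod : ∀ e : Fin m → (Fin r → Fin 2) → ℂ, ∀ b : Fin m → Fin r → Fin 2,
        (∀ j ≠ k, e j (b j) = c j (a j)) → ∏ j, e j (b j) = e k (b k) * P := fun e b h => by
      rw [Fintype.prod_eq_mul_prod_compl k]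
      exact congrArg _ (Finset.prod_congr rfl fun j hj => h j (by simpa using hj))
    simp only [extend_fillBlocks hT, productState_fillBlocks hT, fillBlocks_comp hT]
    have hleft : ∀ u, ∏ j, c j (Function.update a k u j) = c k u * P := fun u => by
      simpa using hprod c (Function.update a k u) fun j hj => by rw [Function.update_of_ne hj]
    have hright : ∏ j, Function.update c k (M *ᵥ c k) j (a j) = (M *ᵥ c k) (a k) * P := by
      simpa using hprod (Function.update c k (M *ᵥ c k)) a fun j hj => by
        rw [Function.update_of_ne hj]
    simp only [hleft, hright, mulVec, dotProduct, Finset.sum_mul, mul_assoc]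
  · simp only [productState_of_notMem _ hx,
      productState_of_notMem _ (extend_notMem_range_fillBlocks hT k _ hx), mul_zero,
      Finset.sum_const_zero]

lemma star_productState_dotProduct_localOp_mulVec (hT : (Function.uncurry T).Injective)
    (M : Matrix (Fin r → Fin 2) (Fin r → Fin 2) ℂ) (c : Fin m → (Fin r → Fin 2) → ℂ) (k : Fin m)
    (hunit : ∀ j ≠ k, star (c j) ⬝ᵥ c j = 1) :
    star (productState T c) ⬝ᵥ localOp M (T k) *ᵥ productState T c = star (c k) ⬝ᵥ M *ᵥ c k := by
  rw [localOp_mulVec_productState hT, star_productState_dotProduct hT,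
    Fintype.prod_eq_single k fun j hj => by rw [Function.update_of_ne hj, hunit j hj],
    Function.update_self]

end ProductState

def consecutiveBlocks (n r : ℕ) (i : Fin (n / r)) (k : Fin r) : Fin n :=
  Fin.castLE (Nat.div_mul_le_self n r) (finProdFinEquiv (i, k))

lemma injective_uncurry_consecutiveBlocks (n r : ℕ) :
    (Function.uncurry (consecutiveBlocks n r)).Injective :=
  (Fin.castLE_injective _).comp finProdFinEquiv.injective

theorem stmt2_general (r n : ℕ)
    (M : Matrix (Fin r → Fin 2) (Fin r → Fin 2) ℂ)
    (hPSD : M.PosSemidef) (hne : M ≠ 0)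
    (hrank : M.rank < Fintype.card (Fin r → Fin 2)) :
    ∃ T : Fin (n / r) → (Fin r → Fin n),
      (∀ i, Function.Injective (T i)) ∧
      (∀ i j, i ≠ j → Disjoint (Set.range (T i)) (Set.range (T j))) ∧
      ∃ ψ : Fin (n / r) → ((Fin n → Fin 2) → ℂ),
        ∀ i,
          (star (ψ i) ⬝ᵥ ψ i) = 1 ∧
          0 < (star (ψ i) ⬝ᵥ (localOp M (T i)).mulVec (ψ i)).re ∧
          ∀ j, j ≠ i → star (ψ i) ⬝ᵥ (localOp M (T j)).mulVec (ψ i) = 0 := by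
  obtain ⟨v, hv, hMv⟩ := hPSD.exists_star_dotProduct_self_eq_one_and_re_pos hne
  obtain ⟨w, hw, hMw⟩ := exists_star_dotProduct_self_eq_one_and_mulVec_eq_zero hrank
  set T := consecutiveBlocks n r
  have hT : (Function.uncurry T).Injective := injective_uncurry_consecutiveBlocks n r
  let c : Fin (n / r) → Fin (n / r) → (Fin r → Fin 2) → ℂ := fun i j => if j = i then v else w
  have hunit (i j) : star (c i j) ⬝ᵥ c i j = 1 := by
    by_cases h : j = i <;> simp [c, h, hv, hw]
  refine ⟨T, injective_of_injective_uncurry hT, fun _ _ => disjoint_range_of_injective_uncurry hT,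
    fun i => productState T (c i), fun i => ⟨?_, ?_, fun j hj => ?_⟩⟩
  · rw [star_productState_dotProduct hT]
    exact Finset.prod_eq_one fun j _ => hunit i j
  · rw [star_productState_dotProduct_localOp_mulVec hT M _ i fun j _ => hunit i j]
    simpa [c] using hMv
  · rw [star_productState_dotProduct_localOp_mulVec hT M _ j fun l _ => hunit i l]
    simp [c, hj, hMw]

/-- If `M` is a nonzero PSD predicate matrix on `r` qubits that is not of
full rank, then there are `⌊n/r⌋` pairwise disjoint `r`-tuples `T_1, …, T_m` of qubits
and unit states `ψ_1, …, ψ_m ∈ ℂ^{2^n}` with `⟨ψ_i, M_{T_i} ψ_i⟩ > 0` and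
`⟨ψ_i, M_{T_j} ψ_i⟩ = 0` for `j ≠ i`.  (Hence `NRD(M, n) ≥ ⌊n/r⌋`.) -/
theorem stmt2 (r n : ℕ) (hr : 1 ≤ r)
    (M : Matrix (Fin r → Fin 2) (Fin r → Fin 2) ℂ)
    (hPSD : M.PosSemidef) (hne : M ≠ 0)
    (hrank : M.rank < Fintype.card (Fin r → Fin 2)) :
    ∃ T : Fin (n / r) → (Fin r → Fin n),
      (∀ i, Function.Injective (T i)) ∧
      (∀ i j, i ≠ j → Disjoint (Set.range (T i)) (Set.range (T j))) ∧
      ∃ ψ : Fin (n / r) → ((Fin n → Fin 2) → ℂ),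
        ∀ i,
          (star (ψ i) ⬝ᵥ ψ i) = 1 ∧
          0 < (star (ψ i) ⬝ᵥ (localOp M (T i)).mulVec (ψ i)).re ∧
          ∀ j, j ≠ i → star (ψ i) ⬝ᵥ (localOp M (T j)).mulVec (ψ i) = 0 :=
  stmt2_general r n M hPSD hne hrank
end

section
/- Let M_1, …, M_r ∈ ℂ^{2×2} be nonzero positive semidefinite matrices, each of rank 1 (equivalently nonzero and not full rank), and let M = M_1 ⊗ ⋯ ⊗ M_r ∈ ℂ^{2^r × 2^r}. Let H be any r-partite r-uniform hypergraph on parts V_1,…,V_r. Then for every hyperedge T ∈ H there exists a product state ψ_T ∈ (ℂ^2)^{⊗n} such that ⟨ψ_T, M_T ψ_T⟩ > 0 while ⟨ψ_T, M_{T'} ψ_T⟩ = 0 for every other hyperedge T' ∈ H, where M_T denotes M applied to the qubits of T (with M_i acting on the qubit of T in part V_i) tensored with identity elsewhere. -/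
/-! For each part `k` choose `τ k` with `⟨τ k, M k τ k⟩ > 0` and a nonzero kernel vector `π k`
of `M k`. The state puts `τ` on the vertices of `T` and `π` on every other vertex, according to
its part. On a product state the energy of a term factorises over the vertices: for `T` every
factor is positive (`‖π‖²` off `T`), while any other hyperedge of the partite hypergraph contains
a vertex outside `T`, whose factor `⟨π, M π⟩` vanishes. -/

open scoped Classical ComplexOrder
open Matrix

/-- The local operator `(M 0 ⊗ ⋯ ⊗ M (r-1))|_T ⊗ Id` on qubits indexed by `V`:
`M k` acts on qubit `T k` and the identity acts elsewhere. -/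
noncomputable def locOpParts {V : Type*} [Fintype V] [DecidableEq V] {r : ℕ}
    (M : Fin r → Matrix (Fin 2) (Fin 2) ℂ) (T : Fin r → V) :
    Matrix (V → Fin 2) (V → Fin 2) ℂ :=
  Matrix.of fun x y =>
    if ∀ v : V, v ∉ Set.range T → x v = y v then
      ∏ k : Fin r, M k (x (T k)) (y (T k))
    else 0

namespace Matrix

variable {V ι R : Type*} [Fintype V] [Fintype ι]

def piKronecker [CommMonoid R] (B : V → Matrix ι ι R) : Matrix (V → ι) (V → ι) R :=
  of fun x y => ∏ v, B v (x v) (y v)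

theorem star_dotProduct_piKronecker_mulVec [DecidableEq V] [CommSemiring R] [StarRing R]
    (B : V → Matrix ι ι R) (φ : V → ι → R) :
    star (fun x : V → ι => ∏ v, φ v (x v)) ⬝ᵥ
        piKronecker B *ᵥ (fun x : V → ι => ∏ v, φ v (x v)) =
      ∏ v, star (φ v) ⬝ᵥ B v *ᵥ φ v := by
  calc _ = ∑ x : V → ι, ∑ y : V → ι,
          ∏ v, star (φ v (x v)) * (B v (x v) (y v) * φ v (y v)) := by
        simp only [dotProduct, mulVec, piKronecker, of_apply, Pi.star_apply, star_prod,
          Finset.mul_sum, Finset.prod_mul_distrib]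
    _ = ∏ v, ∑ a, ∑ b, star (φ v a) * (B v a b * φ v b) := by
        simp only [Fintype.prod_sum]
    _ = _ := by
        simp only [dotProduct, mulVec, Pi.star_apply, Finset.mul_sum]

theorem PosSemidef.exists_star_dotProduct_mulVec_pos {n 𝕜 : Type*} [Fintype n] [RCLike 𝕜]
    {A : Matrix n n 𝕜} (hA : A.PosSemidef) (h0 : A ≠ 0) :
    ∃ x, 0 < star x ⬝ᵥ A *ᵥ x := by
  obtain ⟨x, hx⟩ : ∃ x, A *ᵥ x ≠ 0 := by
    by_contra! h
    exact h0 (ext_of_mulVec_single fun i => by rw [h, zero_mulVec])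
  exact ⟨x, (hA.dotProduct_mulVec_nonneg x).lt_of_ne' ((hA.dotProduct_mulVec_zero_iff x).not.2 hx)⟩

theorem exists_mulVec_eq_zero_of_rank_lt {n : Type*} [Fintype n] [DecidableEq n]
    {K : Type*} [Field K] {A : Matrix n n K} (h : A.rank < Fintype.card n) :
    ∃ w ≠ 0, A *ᵥ w = 0 :=
  exists_mulVec_eq_zero_iff.2 <| by
    by_contra hdet
    exact h.ne (A.rank_of_isUnit <| (isUnit_iff_isUnit_det A).2 (isUnit_iff_ne_zero.2 hdet))

end Matrix

theorem exists_apply_notMem_range_of_ne {ι V : Type*} {p : V → ι} {T T' : ι → V}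
    (hT : ∀ k, p (T k) = k) (hT' : ∀ k, p (T' k) = k) (h : T' ≠ T) :
    ∃ k, T' k ∉ Set.range T := by
  obtain ⟨k, hk⟩ := Function.ne_iff.1 h
  refine ⟨k, fun ⟨j, hj⟩ => hk ?_⟩
  obtain rfl : j = k := by rw [← hT j, hj, hT' k]
  exact hj.symm

theorem locOpParts_eq_piKronecker {V : Type*} [Fintype V] [DecidableEq V] {r : ℕ}
    (M : Fin r → Matrix (Fin 2) (Fin 2) ℂ) {T : Fin r → V} {p : V → Fin r}
    (hp : ∀ k, p (T k) = k) :
    locOpParts M T = piKronecker fun v => if v ∈ Set.range T then M (p v) else 1 := by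
  ext x y
  simp only [locOpParts, piKronecker, of_apply]
  split_ifs with h
  · rw [← Finset.prod_subset (Finset.subset_univ (Finset.univ.image T)) ?_,
      Finset.prod_image (Function.LeftInverse.injective hp).injOn]
    · simp [hp]
    · intro v _ hv
      have hv : v ∉ Set.range T := by simpa using hv
      rw [if_neg hv, h v hv, one_apply_eq]
  · push Not at h
    obtain ⟨v, hv, hxy⟩ := h
    exact (Finset.prod_eq_zero (Finset.mem_univ v) (by rw [if_neg hv, one_apply_ne hxy])).symm

/-- For `M = M_1 ⊗ ⋯ ⊗ M_r` with each `M_i ∈ ℂ^{2×2}` nonzero PSD of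
rank 1, and `H` an r-partite r-uniform hypergraph (partition recorded by `p : V → Fin r`
with `p (T k) = k` for every hyperedge `T ∈ H`), every hyperedge `T ∈ H` has a product
state `ψ_T = ⊗_v φ_v` with `⟨ψ_T, M_T ψ_T⟩ > 0` and `⟨ψ_T, M_{T'} ψ_T⟩ = 0` for all
other `T' ∈ H`. -/
theorem stmt3 {V : Type*} [Fintype V] [DecidableEq V] (r : ℕ)
    (M : Fin r → Matrix (Fin 2) (Fin 2) ℂ)
    (hPSD : ∀ k, (M k).PosSemidef) (hne : ∀ k, M k ≠ 0) (hrk : ∀ k, (M k).rank = 1)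
    (p : V → Fin r) (H : Finset (Fin r → V)) (hpart : ∀ T ∈ H, ∀ k, p (T k) = k) :
    ∀ T ∈ H, ∃ φ : V → (Fin 2 → ℂ),
      0 < (star (fun x : V → Fin 2 => ∏ v, φ v (x v)) ⬝ᵥ
            (locOpParts M T).mulVec (fun x : V → Fin 2 => ∏ v, φ v (x v))).re ∧
      ∀ T' ∈ H, T' ≠ T →
        star (fun x : V → Fin 2 => ∏ v, φ v (x v)) ⬝ᵥ
          (locOpParts M T').mulVec (fun x : V → Fin 2 => ∏ v, φ v (x v)) = 0 := by
  intro T hT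
  choose τ hτ using fun k => (hPSD k).exists_star_dotProduct_mulVec_pos (hne k)
  choose π hπ0 hπ using fun k => exists_mulVec_eq_zero_of_rank_lt (A := M k) (by simp [hrk k])
  let φ : V → Fin 2 → ℂ := fun v => if v ∈ Set.range T then τ (p v) else π (p v)
  refine ⟨φ, ?_, fun T' hT' hT'T => ?_⟩
  · rw [locOpParts_eq_piKronecker M (hpart T hT), star_dotProduct_piKronecker_mulVec]
    refine (Complex.pos_iff.1 (Finset.prod_pos fun v _ => ?_)).1
    by_cases hv : v ∈ Set.range T
    · simpa only [φ, hv, if_true] using hτ (p v)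
    · simpa only [φ, hv, if_false, one_mulVec] using dotProduct_star_self_pos_iff.2 (hπ0 (p v))
  · rw [locOpParts_eq_piKronecker M (hpart T' hT'), star_dotProduct_piKronecker_mulVec]
    obtain ⟨k, hk⟩ := exists_apply_notMem_range_of_ne (hpart T hT) (hpart T' hT') hT'T
    refine Finset.prod_eq_zero (Finset.mem_univ (T' k)) ?_
    simp only [φ, hk, if_false, Set.mem_range_self, if_true, hpart T' hT' k, hπ k,
      dotProduct_zero]
end

section
/- Let M ∈ ℂ^{2^r × 2^r} be a diagonal matrix with entries in {0,1}, corresponding to a relation R ⊆ {0,1}^r (so M|x⟩ = |x⟩ if x ∈ R and M|x⟩ = 0 otherwise). Let H be an r-uniform hypergraph on [n] and w : H → ℝ_{≥0}. Then w is an ε-sparsifier of the quantum Hamiltonian with terms M_T = M|_T ⊗ Id for T ∈ H (preserving energies of all states ψ ∈ ℂ^{2^n} up to factor 1±ε) if and only if w is an ε-sparsifier of the classical CSP instance: for all assignments x ∈ {0,1}^n, Σ_{T∈H} w(T)·1[x|_T ∈ R] ∈ [1−ε,1+ε]·Σ_{T∈H} 1[x|_T ∈ R]. -/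
open scoped Classical ComplexOrder
open Matrix

/-- The classical (diagonal 0/1) predicate matrix associated to a relation
`R ⊆ {0,1}^r`. -/
noncomputable def clOp (r : ℕ) (R : Finset (Fin r → Fin 2)) :
    Matrix (Fin r → Fin 2) (Fin r → Fin 2) ℂ :=
  Matrix.diagonal fun a => if a ∈ R then 1 else 0

/-
Idea: a classical relation gives local terms that are diagonal in the computational basis, so
the energy of a state ψ is the classical count averaged against the weights |ψ x|². Every
quantum sandwich inequality is therefore a nonnegative combination of classical ones, and the
basis states ψ = |x⟩ recover the classical ones exactly.
-/

theorem re_star_dotProduct_diagonal_ofReal_mulVec {α : Type*} [Fintype α] [DecidableEq α]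
    (d : α → ℝ) (ψ : α → ℂ) :
    (star ψ ⬝ᵥ diagonal (fun x => (d x : ℂ)) *ᵥ ψ).re = ∑ x, Complex.normSq (ψ x) * d x := by
  simp only [mulVec_diagonal, dotProduct, Complex.re_sum, Pi.star_apply, RCLike.star_def]
  refine Finset.sum_congr rfl fun x _ => ?_
  rw [mul_left_comm, ← Complex.normSq_eq_conj_mul_self, ← Complex.ofReal_mul, Complex.ofReal_re,
    mul_comm]

theorem forall_sum_normSq_mul_le_iff {α : Type*} [Fintype α] (a b : α → ℝ) :
    (∀ ψ : α → ℂ, ∑ x, Complex.normSq (ψ x) * a x ≤ ∑ x, Complex.normSq (ψ x) * b x) ↔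
      ∀ x, a x ≤ b x := by
  refine ⟨fun h x => by simpa [Pi.single_apply] using h (Pi.single x 1), fun h ψ => ?_⟩
  exact Finset.sum_le_sum fun x _ => mul_le_mul_of_nonneg_left (h x) (Complex.normSq_nonneg _)

theorem localOp_diagonal {n r : ℕ} (d : (Fin r → Fin 2) → ℂ) (T : Fin r → Fin n) :
    localOp (diagonal d) T = diagonal fun x => d (x ∘ T) := by
  ext x y
  by_cases hxy : x = y
  · simp [localOp, hxy]
  · simp only [localOp, of_apply, diagonal_apply_ne _ hxy]
    split_ifs with houtside
    · refine diagonal_apply_ne _ fun hT => hxy (funext fun i => ?_)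
      by_cases hi : i ∈ Set.range T
      · obtain ⟨j, rfl⟩ := hi
        exact congrFun hT j
      · exact houtside i hi
    · rfl

theorem clOp_eq_diagonal_ofReal (r : ℕ) (R : Finset (Fin r → Fin 2)) :
    clOp r R = diagonal fun a => ((if a ∈ R then 1 else 0 : ℝ) : ℂ) := by
  simp only [clOp, apply_ite Complex.ofReal, Complex.ofReal_one, Complex.ofReal_zero]

theorem re_star_dotProduct_localOp_clOp_mulVec {n r : ℕ} (R : Finset (Fin r → Fin 2))
    (T : Fin r → Fin n) (ψ : (Fin n → Fin 2) → ℂ) :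
    (star ψ ⬝ᵥ localOp (clOp r R) T *ᵥ ψ).re =
      ∑ x, Complex.normSq (ψ x) * if x ∘ T ∈ R then 1 else 0 := by
  rw [clOp_eq_diagonal_ofReal, localOp_diagonal, re_star_dotProduct_diagonal_ofReal_mulVec]

theorem sum_mul_re_star_dotProduct_localOp_clOp_mulVec {n r : ℕ} (R : Finset (Fin r → Fin 2))
    (H : Finset (Fin r → Fin n)) (g : (Fin r → Fin n) → ℝ) (ψ : (Fin n → Fin 2) → ℂ) :
    ∑ T ∈ H, g T * (star ψ ⬝ᵥ localOp (clOp r R) T *ᵥ ψ).re =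
      ∑ x, Complex.normSq (ψ x) * ∑ T ∈ H, g T * if x ∘ T ∈ R then 1 else 0 := by
  simp only [re_star_dotProduct_localOp_clOp_mulVec, Finset.mul_sum]
  rw [Finset.sum_comm]
  exact Finset.sum_congr rfl fun x _ => Finset.sum_congr rfl fun T _ => mul_left_comm _ _ _

theorem stmt5_general (r n : ℕ) (R : Finset (Fin r → Fin 2))
    (H : Finset (Fin r → Fin n))
    (w : (Fin r → Fin n) → ℝ) (ε : ℝ) :
    (∀ ψ : (Fin n → Fin 2) → ℂ,
      (1 - ε) * (∑ T ∈ H, (star ψ ⬝ᵥ (localOp (clOp r R) T).mulVec ψ).re) ≤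
        (∑ T ∈ H, w T * (star ψ ⬝ᵥ (localOp (clOp r R) T).mulVec ψ).re) ∧
      (∑ T ∈ H, w T * (star ψ ⬝ᵥ (localOp (clOp r R) T).mulVec ψ).re) ≤
        (1 + ε) * (∑ T ∈ H, (star ψ ⬝ᵥ (localOp (clOp r R) T).mulVec ψ).re))
    ↔
    (∀ x : Fin n → Fin 2,
      (1 - ε) * (∑ T ∈ H, (if x ∘ T ∈ R then (1 : ℝ) else 0)) ≤
        (∑ T ∈ H, w T * (if x ∘ T ∈ R then (1 : ℝ) else 0)) ∧
      (∑ T ∈ H, w T * (if x ∘ T ∈ R then (1 : ℝ) else 0)) ≤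
        (1 + ε) * (∑ T ∈ H, (if x ∘ T ∈ R then (1 : ℝ) else 0))) := by
  have hsandwich (a b : (Fin r → Fin n) → ℝ) :
      (∀ ψ : (Fin n → Fin 2) → ℂ, ∑ T ∈ H, a T * (star ψ ⬝ᵥ localOp (clOp r R) T *ᵥ ψ).re ≤
        ∑ T ∈ H, b T * (star ψ ⬝ᵥ localOp (clOp r R) T *ᵥ ψ).re) ↔
      ∀ x : Fin n → Fin 2, ∑ T ∈ H, a T * (if x ∘ T ∈ R then 1 else 0) ≤
        ∑ T ∈ H, b T * (if x ∘ T ∈ R then 1 else 0) := by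
    simp only [sum_mul_re_star_dotProduct_localOp_clOp_mulVec]
    exact forall_sum_normSq_mul_le_iff _ _
  simpa only [forall_and, Finset.mul_sum] using
    (hsandwich (fun _ => 1 - ε) w).and (hsandwich w fun _ => 1 + ε)

/-- For a classical (diagonal, 0/1) predicate matrix coming from a relation
`R ⊆ {0,1}^r`, a nonnegative weighting `w` of an r-uniform hypergraph `H` is an
ε-sparsifier of the quantum Hamiltonian (energies of all states preserved up to `1±ε`)
if and only if it is an ε-sparsifier of the classical CSP instance (satisfied-constraint
counts of all assignments preserved up to `1±ε`). -/
theorem stmt5 (r n : ℕ) (R : Finset (Fin r → Fin 2))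
    (H : Finset (Fin r → Fin n)) (hinj : ∀ T ∈ H, Function.Injective T)
    (w : (Fin r → Fin n) → ℝ) (hw : ∀ T, 0 ≤ w T) (ε : ℝ) (hε : 0 ≤ ε) :
    (∀ ψ : (Fin n → Fin 2) → ℂ,
      (1 - ε) * (∑ T ∈ H, (star ψ ⬝ᵥ (localOp (clOp r R) T).mulVec ψ).re) ≤
        (∑ T ∈ H, w T * (star ψ ⬝ᵥ (localOp (clOp r R) T).mulVec ψ).re) ∧
      (∑ T ∈ H, w T * (star ψ ⬝ᵥ (localOp (clOp r R) T).mulVec ψ).re) ≤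
        (1 + ε) * (∑ T ∈ H, (star ψ ⬝ᵥ (localOp (clOp r R) T).mulVec ψ).re))
    ↔
    (∀ x : Fin n → Fin 2,
      (1 - ε) * (∑ T ∈ H, (if x ∘ T ∈ R then (1 : ℝ) else 0)) ≤
        (∑ T ∈ H, w T * (if x ∘ T ∈ R then (1 : ℝ) else 0)) ∧
      (∑ T ∈ H, w T * (if x ∘ T ∈ R then (1 : ℝ) else 0)) ≤
        (1 + ε) * (∑ T ∈ H, (if x ∘ T ∈ R then (1 : ℝ) else 0))) :=
  stmt5_general r n R H w ε
end

section
/- Fix constants α ∈ (0, 1/2) and c ≥ 1. Let R be a uniformly random subset of {0,1}^r of cardinality k where α·2^r ≤ k ≤ (1−α)·2^r. If c ≤ log₂ r − log₂ log₂(1/α) − 1, then with probability 1 − o(1) as r → ∞, there exist b ∈ {0,1}^{r−c} and literals ℓ_1 ∈ {x_1, x̄_1}, …, ℓ_c ∈ {x_c, x̄_c} such that the projection R(b_1,…,b_{r−c}, ℓ_1,…,ℓ_c) equals AND_c = {1^c}. -/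
open scoped Classical

/-- The string in `{0,1}^r` obtained from constants `b` on the first `r-c` coordinates
and literals `ℓ_j ∈ {x_j, x̄_j}` (encoded by negation flags `s : Fin c → Bool`)
evaluated at an assignment `x : Fin c → Bool` on the last `c` coordinates. -/
def emb (r c : ℕ) (hcr : c ≤ r) (b : Fin (r - c) → Bool) (s x : Fin c → Bool) :
    Fin r → Bool := fun i =>
  if h : (i : ℕ) < r - c then b ⟨i, h⟩
  else Bool.xor (x ⟨(i : ℕ) - (r - c), by have := i.isLt; omega⟩)
                (s ⟨(i : ℕ) - (r - c), by have := i.isLt; omega⟩)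

/-!
Take `p = k / 2^r` and include each point of `{0,1}^r` in `R` independently with probability `p`.
Split `{0,1}^r = {0,1}^{r-c} × {0,1}^c`. If some fibre `R_b` is a single point `y`, the literals
`ℓ_j = x_j ⊕ ¬y_j` give the projection `AND_c`. The fibres are independent, and each one is a
singleton with probability `2^c p (1-p)^{2^c-1} ≥ 2^c α^{2^c}`. So the probability that no fibre
is a singleton is at most `exp (-2^r α^{2^c})`, and the bound on `c` makes this at most
`exp (-2^{r/2})`. Conditioned on `|R| = k` the sample is uniform. By Stirling's formula,
`|R| = k` has probability `C(2^r, k) p^k (1-p)^{2^r-k} ≥ 2^{-(r+1)/2}`.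
-/

open Finset Real Nat

section Fiber

variable {α β γ : Type*} [Fintype γ]

noncomputable def fiber (e : β × γ ≃ α) (R : Finset α) (b : β) : Finset γ :=
  univ.filter fun y => e (b, y) ∈ R

@[simp] lemma mem_fiber {e : β × γ ≃ α} {R : Finset α} {b : β} {y : γ} :
    y ∈ fiber e R b ↔ e (b, y) ∈ R := by
  simp [fiber]

noncomputable def fiberEquiv [Fintype α] (e : β × γ ≃ α) : Finset α ≃ (β → Finset γ) where
  toFun := fiber e
  invFun f := univ.filter fun z => (e.symm z).2 ∈ f (e.symm z).1
  left_inv R := by ext z; simp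
  right_inv f := by funext b; ext y; simp

lemma sum_prod_fiber [Fintype α] [Fintype β] {M : Type*} [CommSemiring M] (e : β × γ ≃ α)
    (g : Finset γ → M) :
    ∑ R : Finset α, ∏ b, g (fiber e R b) = (∑ S, g S) ^ Fintype.card β := by
  rw [← Finset.card_univ, ← prod_const, Fintype.prod_sum]
  exact Fintype.sum_equiv (fiberEquiv e) _ _ fun R => rfl

end Fiber

section BernoulliWeight

variable {α β γ : Type*} [Fintype α] [Fintype β] [Fintype γ] {K : Type*} [CommRing K]

noncomputable def bernoulliWeight (p : K) (S : Finset γ) : K :=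
  ∏ y, if y ∈ S then p else 1 - p

lemma bernoulliWeight_eq (p : K) (S : Finset γ) :
    bernoulliWeight p S = p ^ #S * (1 - p) ^ (Fintype.card γ - #S) := by
  simp [bernoulliWeight, prod_ite, filter_notMem_eq_sdiff, card_univ_sdiff]

lemma bernoulliWeight_nonneg [PartialOrder K] [IsOrderedRing K] {p : K} (hp0 : 0 ≤ p)
    (hp1 : p ≤ 1) (S : Finset γ) : 0 ≤ bernoulliWeight p S :=
  prod_nonneg fun y _ => by split_ifs; exacts [hp0, sub_nonneg.2 hp1]

lemma sum_bernoulliWeight (p : K) : ∑ S : Finset γ, bernoulliWeight p S = 1 := by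
  simp [bernoulliWeight_eq, Fintype.sum_pow_mul_eq_add_pow]

lemma bernoulliWeight_eq_prod_fiber (e : β × γ ≃ α) (p : K) (R : Finset α) :
    bernoulliWeight p R = ∏ b, bernoulliWeight p (fiber e R b) := by
  simp only [bernoulliWeight, ← e.prod_comp, Fintype.prod_prod_type, mem_fiber]

lemma sum_bernoulliWeight_card_ne_one (p : K) :
    ∑ S : Finset γ with #S ≠ 1, bernoulliWeight p S =
      1 - Fintype.card γ * (p * (1 - p) ^ (Fintype.card γ - 1)) := by
  have hsingle : ∑ S : Finset γ with #S = 1, bernoulliWeight p S =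
      Fintype.card γ * (p * (1 - p) ^ (Fintype.card γ - 1)) := by
    rw [sum_congr rfl fun S hS => by rw [bernoulliWeight_eq, (mem_filter.1 hS).2, pow_one],
      sum_const, nsmul_eq_mul, ← powerset_univ, ← powersetCard_eq_filter, card_powersetCard,
      Finset.card_univ, Nat.choose_one_right]
  have hsplit := sum_filter_add_sum_filter_not univ (fun S : Finset γ => #S = 1)
    (bernoulliWeight p)
  rw [sum_bernoulliWeight, hsingle] at hsplit
  exact eq_sub_of_add_eq' hsplit

lemma sum_bernoulliWeight_fiber_card_ne_one (e : β × γ ≃ α) (p : K) :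
    ∑ R : Finset α with ∀ b, #(fiber e R b) ≠ 1, bernoulliWeight p R =
      (1 - Fintype.card γ * (p * (1 - p) ^ (Fintype.card γ - 1))) ^ Fintype.card β := by
  calc ∑ R : Finset α with ∀ b, #(fiber e R b) ≠ 1, bernoulliWeight p R
      = ∑ R : Finset α, ∏ b,
          if #(fiber e R b) ≠ 1 then bernoulliWeight p (fiber e R b) else 0 := by
        rw [sum_filter]
        refine sum_congr rfl fun R _ => ?_
        rw [Fintype.prod_ite_zero, bernoulliWeight_eq_prod_fiber e]
    _ = (∑ S : Finset γ, if #S ≠ 1 then bernoulliWeight p S else 0) ^ Fintype.card β :=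
        sum_prod_fiber e fun S => if #S ≠ 1 then bernoulliWeight p S else 0
    _ = _ := by rw [← sum_filter, sum_bernoulliWeight_card_ne_one]

lemma sum_bernoulliWeight_fiber_card_ne_one_le_exp (e : β × γ ≃ α) {p : ℝ} (hp0 : 0 ≤ p)
    (hp1 : p ≤ 1) :
    ∑ R : Finset α with ∀ b, #(fiber e R b) ≠ 1, bernoulliWeight p R ≤
      exp (-(Fintype.card β * Fintype.card γ * (p * (1 - p) ^ (Fintype.card γ - 1)))) := by
  set s := Fintype.card γ * (p * (1 - p) ^ (Fintype.card γ - 1))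
  have hs : 0 ≤ 1 - s := by
    rw [← sum_bernoulliWeight_card_ne_one]
    exact sum_nonneg fun S _ => bernoulliWeight_nonneg hp0 hp1 S
  calc ∑ R : Finset α with ∀ b, #(fiber e R b) ≠ 1, bernoulliWeight p R
      = (1 - s) ^ Fintype.card β := sum_bernoulliWeight_fiber_card_ne_one e p
    _ ≤ exp (-s) ^ Fintype.card β := pow_le_pow_left₀ hs (one_sub_le_exp_neg s) _
    _ = _ := by rw [← exp_nat_mul, mul_neg, mul_assoc]

end BernoulliWeight

namespace Stirling

lemma stirlingSeq_two : stirlingSeq 2 = exp 1 ^ 2 / 4 := by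
  have h4 : √(2 * ((2 : ℕ) : ℝ)) = 2 := by
    rw [show (2 * ((2 : ℕ) : ℝ)) = 2 ^ 2 by norm_num, sqrt_sq zero_le_two]
  rw [stirlingSeq, h4]
  field_simp
  norm_num [Nat.factorial]

lemma factorial_le_stirling {n : ℕ} (hn : 2 ≤ n) :
    (n ! : ℝ) ≤ exp 1 ^ 2 / 4 * (√(2 * n) * (n / exp 1) ^ n) := by
  obtain ⟨m, rfl⟩ : ∃ m, n = m + 1 := ⟨n - 1, by omega⟩
  have h := stirlingSeq'_antitone (show 1 ≤ m by omega)
  simp only [Function.comp, stirlingSeq_two] at h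
  rwa [stirlingSeq, div_le_iff₀ (by positivity)] at h

end Stirling

section BinomialMass

lemma exp_one_pow_four_le : exp 1 ^ 4 ≤ 32 * √π := by
  have hπ : (1.772 : ℝ) ≤ √π := by
    rw [show (1.772 : ℝ) = √(1.772 ^ 2) by rw [sqrt_sq]; norm_num]
    exact sqrt_le_sqrt (by nlinarith [pi_gt_d6])
  have he : exp 1 ^ 4 ≤ 2.7182818286 ^ 4 := by gcongr; exact exp_one_lt_d9.le
  linarith

lemma sqrt_two_mul_mul_sqrt_two_mul_le {x y : ℝ} (hx : 0 ≤ x) (hy : 0 ≤ y) :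
    √(2 * x) * √(2 * y) ≤ x + y := by
  rw [← sqrt_mul (by positivity), sqrt_le_left (by positivity)]
  nlinarith [sq_nonneg (x - y)]

lemma exp_neg_one_le_div_add_one_pow (m : ℕ) : exp (-1) ≤ ((m : ℝ) / (m + 1)) ^ m := by
  rcases m.eq_zero_or_pos with rfl | hm
  · simp
  have h : (m : ℝ) / (m + 1) = (1 + (m : ℝ)⁻¹)⁻¹ := by field_simp
  rw [h, inv_pow, exp_neg]
  exact inv_anti₀ (by positivity) one_add_inv_pow_le_exp

lemma one_div_sqrt_le_choose_mul_pow_mul_pow_of_two_le {k m : ℕ} (hk : 2 ≤ k) (hm : 2 ≤ m) :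
    1 / √(2 * (k + m)) ≤
      (k + m).choose k * ((k : ℝ) / (k + m)) ^ k * ((m : ℝ) / (k + m)) ^ m := by
  set n : ℝ := k + m
  have hn0 : 0 < n := by positivity
  have hk0 : (0 : ℝ) < k := by positivity
  have hm0 : (0 : ℝ) < m := by positivity
  have hsplit : (n / exp 1) ^ (k + m) * ((k / n) ^ k * (m / n) ^ m) =
      (k / exp 1) ^ k * (m / exp 1) ^ m := by
    rw [pow_add, mul_mul_mul_comm, ← mul_pow, ← mul_pow]
    congr 2 <;> field_simp
  have hfact : (k ! : ℝ) * m ! ≤ √(2 * n) * ((k + m) ! * ((k / n) ^ k * (m / n) ^ m)) :=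
    calc (k ! : ℝ) * m !
        ≤ (exp 1 ^ 2 / 4 * (√(2 * k) * (k / exp 1) ^ k)) *
            (exp 1 ^ 2 / 4 * (√(2 * m) * (m / exp 1) ^ m)) :=
          mul_le_mul (Stirling.factorial_le_stirling hk) (Stirling.factorial_le_stirling hm)
            (by positivity) (by positivity)
      _ = exp 1 ^ 4 / 16 * (√(2 * k) * √(2 * m)) * ((k / exp 1) ^ k * (m / exp 1) ^ m) := by ring
      _ ≤ 2 * √π * n * ((k / exp 1) ^ k * (m / exp 1) ^ m) := by
          gcongr
          · linarith [exp_one_pow_four_le]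
          · exact sqrt_two_mul_mul_sqrt_two_mul_le hk0.le hm0.le
      _ = √(2 * n) * (√(2 * π * n) * (n / exp 1) ^ (k + m) * ((k / n) ^ k * (m / n) ^ m)) := by
          have hsqrt : √(2 * n) * √(2 * π * n) = 2 * √π * n := by
            rw [← sqrt_mul (by positivity), show 2 * n * (2 * π * n) = (2 * n) ^ 2 * π by ring,
              sqrt_mul (by positivity), sqrt_sq (by positivity)]
            ring
          rw [mul_assoc _ ((n / exp 1) ^ (k + m)), hsplit, ← hsqrt]
          ring
      _ ≤ √(2 * n) * ((k + m) ! * ((k / n) ^ k * (m / n) ^ m)) := by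
          gcongr
          simpa using Stirling.le_factorial_stirling (k + m)
  rw [Nat.cast_add_choose, div_le_iff₀ (by positivity),
    show ((k + m) ! : ℝ) / (k ! * m !) * (k / n) ^ k * (m / n) ^ m * √(2 * n) =
      √(2 * n) * ((k + m) ! * ((k / n) ^ k * (m / n) ^ m)) / (k ! * m !) by ring,
    le_div_iff₀ (by positivity), one_mul]
  exact hfact

lemma one_div_sqrt_le_choose_mul_pow_mul_pow {k m : ℕ} (hk : 0 < k) (hm : 0 < m)
    (h4 : 4 ≤ k + m) :
    1 / √(2 * (k + m)) ≤
      (k + m).choose k * ((k : ℝ) / (k + m)) ^ k * ((m : ℝ) / (k + m)) ^ m := by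
  wlog hkm : k ≤ m generalizing k m
  · have := this hm hk (by omega) (by omega)
    rwa [add_comm (m : ℝ), Nat.add_comm m, ← Nat.choose_symm_add, mul_right_comm] at this
  obtain rfl | hk2 : k = 1 ∨ 2 ≤ k := by omega
  · simp only [Nat.cast_one, Nat.choose_one_right]
    have hsqrt : exp 1 ≤ √(2 * (1 + m)) := by
      rw [le_sqrt (exp_pos 1).le (by positivity)]
      have : (3 : ℝ) ≤ m := by exact_mod_cast (show 3 ≤ m by omega)
      have : exp 1 < 2.72 := by linarith [exp_one_lt_d9]
      nlinarith [exp_pos 1]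
    calc 1 / √(2 * (1 + m)) ≤ exp (-1) := by
          rw [exp_neg, one_div]; exact inv_anti₀ (exp_pos 1) hsqrt
      _ ≤ ((m : ℝ) / (m + 1)) ^ m := exp_neg_one_le_div_add_one_pow m
      _ = _ := by push_cast; rw [pow_one, add_comm (m : ℝ)]; field_simp
  · exact one_div_sqrt_le_choose_mul_pow_mul_pow_of_two_le hk2 (by omega)

lemma one_div_sqrt_le_choose_mul_pow_mul_one_sub_pow {n k : ℕ} (hk : 0 < k) (hkn : k < n)
    (hn : 4 ≤ n) :
    1 / √(2 * n) ≤ n.choose k * ((k : ℝ) / n) ^ k * (1 - (k : ℝ) / n) ^ (n - k) := by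
  obtain ⟨m, rfl⟩ : ∃ m, n = k + m := ⟨n - k, by omega⟩
  have h := one_div_sqrt_le_choose_mul_pow_mul_pow hk (by omega : 0 < m) hn
  have hkm : (0 : ℝ) < k + m := by positivity
  rw [Nat.add_sub_cancel_left]
  have hsub : 1 - (k : ℝ) / (k + m) = m / (k + m) := by field_simp; ring
  push_cast
  rwa [hsub]

lemma sqrt_two_mul_two_pow (r : ℕ) : √(2 * 2 ^ r) = (2 : ℝ) ^ (((r : ℝ) + 1) / 2) := by
  rw [sqrt_eq_rpow, show (2 : ℝ) * 2 ^ r = 2 ^ (r + 1) by ring, ← rpow_natCast,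
    ← rpow_mul zero_le_two]
  push_cast
  ring_nf

lemma one_div_two_rpow_le_card_mul_pow_mul_pow {r k : ℕ} (hr : 2 ≤ r) (hk0 : 0 < k)
    (hkr : k < 2 ^ r) :
    1 / 2 ^ (((r : ℝ) + 1) / 2) ≤ (#{R : Finset (Fin r → Bool) | #R = k} : ℝ) *
      (((k : ℝ) / 2 ^ r) ^ k * (1 - (k : ℝ) / 2 ^ r) ^ (2 ^ r - k)) := by
  have hcard : #{R : Finset (Fin r → Bool) | #R = k} = (2 ^ r).choose k := by
    rw [← powerset_univ, ← powersetCard_eq_filter, card_powersetCard, Finset.card_univ,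
      Fintype.card_fun, Fintype.card_bool, Fintype.card_fin]
  have h := one_div_sqrt_le_choose_mul_pow_mul_one_sub_pow hk0 hkr
    (by simpa using Nat.pow_le_pow_right two_pos hr)
  push_cast at h
  rwa [sqrt_two_mul_two_pow, mul_assoc, ← hcard] at h

end BinomialMass

section Cube

def cubeSplit (r c : ℕ) (hcr : c ≤ r) :
    (Fin (r - c) → Bool) × (Fin c → Bool) ≃ (Fin r → Bool) :=
  (Fin.appendEquiv (r - c) c).trans (Equiv.piCongrLeft' _ (finCongr (Nat.sub_add_cancel hcr)))

lemma emb_eq_cubeSplit (r c : ℕ) (hcr : c ≤ r) (b : Fin (r - c) → Bool) (s x : Fin c → Bool) :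
    emb r c hcr b s x = cubeSplit r c hcr (b, fun j => (x j).xor (s j)) := by
  funext i
  simp only [emb, cubeSplit, Equiv.trans_apply, Equiv.piCongrLeft'_apply, finCongr_symm,
    finCongr_apply, Fin.appendEquiv_apply, Fin.append, Fin.addCases, Fin.val_cast, Fin.cast_cast,
    eq_rec_constant]
  split_ifs <;> rfl

def HasAndProjection (r c : ℕ) (hcr : c ≤ r) (R : Finset (Fin r → Bool)) : Prop :=
  ∃ (b : Fin (r - c) → Bool) (s : Fin c → Bool),
    ∀ x : Fin c → Bool, (emb r c hcr b s x ∈ R ↔ x = fun _ => true)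

lemma hasAndProjection_of_card_fiber_eq_one {r c : ℕ} {hcr : c ≤ r} {R : Finset (Fin r → Bool)}
    {b : Fin (r - c) → Bool} (h : #(fiber (cubeSplit r c hcr) R b) = 1) :
    HasAndProjection r c hcr R := by
  obtain ⟨y, hy⟩ := card_eq_one.1 h
  refine ⟨b, fun j => !y j, fun x => ?_⟩
  rw [emb_eq_cubeSplit, ← mem_fiber, hy, mem_singleton, funext_iff, funext_iff]
  refine forall_congr' fun j => ?_
  cases x j <;> cases y j <;> decide

lemma card_not_hasAndProjection_mul_le_exp {r c : ℕ} (hcr : c ≤ r) (k : ℕ) {p : ℝ}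
    (hp0 : 0 ≤ p) (hp1 : p ≤ 1) :
    (#{R : Finset (Fin r → Bool) | #R = k ∧ ¬HasAndProjection r c hcr R} : ℝ) *
        (p ^ k * (1 - p) ^ (2 ^ r - k)) ≤
      exp (-(2 ^ r * (p * (1 - p) ^ (2 ^ c - 1)))) := by
  set e := cubeSplit r c hcr
  calc (#{R : Finset (Fin r → Bool) | #R = k ∧ ¬HasAndProjection r c hcr R} : ℝ) *
        (p ^ k * (1 - p) ^ (2 ^ r - k))
      = ∑ R : Finset (Fin r → Bool) with #R = k ∧ ¬HasAndProjection r c hcr R,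
          bernoulliWeight p R := by
        rw [sum_congr rfl fun R hR => by
          rw [bernoulliWeight_eq, (mem_filter.1 hR).2.1, Fintype.card_fun, Fintype.card_bool,
            Fintype.card_fin], sum_const, nsmul_eq_mul]
    _ ≤ ∑ R : Finset (Fin r → Bool) with ∀ b, #(fiber e R b) ≠ 1, bernoulliWeight p R := by
        refine sum_le_sum_of_subset_of_nonneg (fun R hR => ?_)
          fun R _ _ => bernoulliWeight_nonneg hp0 hp1 R
        simp only [mem_filter, mem_univ, true_and] at hR ⊢
        exact fun b hb => hR.2 (hasAndProjection_of_card_fiber_eq_one hb)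
    _ ≤ _ := by
        have h := sum_bernoulliWeight_fiber_card_ne_one_le_exp e hp0 hp1
        simp only [Fintype.card_fun, Fintype.card_bool, Fintype.card_fin, Nat.cast_pow,
          Nat.cast_ofNat] at h
        rwa [← pow_add, Nat.sub_add_cancel hcr] at h

end Cube

section Estimates

lemma two_pow_succ_mul_le_of_le_logb_sub {L : ℝ} (hL : 1 ≤ L) {c r : ℕ}
    (h : (c : ℝ) ≤ logb 2 r - logb 2 L - 1) : 2 ^ (c + 1) * L ≤ r := by
  have hlogL : 0 ≤ logb 2 L := logb_nonneg one_lt_two hL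
  have hr : (0 : ℝ) < r := by
    rcases r.eq_zero_or_pos with rfl | hr
    · simp only [CharP.cast_eq_zero, logb_zero] at h
      linarith [(c.cast_nonneg : (0 : ℝ) ≤ c)]
    · exact_mod_cast hr
  have h' : (c + 1 : ℝ) + logb 2 L ≤ logb 2 r := by linarith
  rw [le_logb_iff_rpow_le one_lt_two hr, rpow_add two_pos, rpow_logb two_pos (by norm_num)
    (by linarith)] at h'
  exact_mod_cast h'

lemma two_rpow_half_le_two_pow_mul_pow {α : ℝ} (hα : 0 < α) {c r : ℕ}
    (h : 2 ^ (c + 1) * logb 2 (1 / α) ≤ r) : (2 : ℝ) ^ ((r : ℝ) / 2) ≤ 2 ^ r * α ^ 2 ^ c := by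
  have hα' : α = 2 ^ (-logb 2 (1 / α)) := by
    rw [rpow_neg zero_le_two, rpow_logb two_pos (by norm_num) (by positivity), one_div, inv_inv]
  rw [hα', ← rpow_natCast _ (2 ^ c), ← rpow_mul zero_le_two, ← rpow_natCast 2 r,
    ← rpow_add two_pos]
  apply rpow_le_rpow_of_exponent_le one_le_two
  push_cast
  rw [pow_succ] at h
  linarith

lemma two_rpow_half_le_two_pow_mul_mul_pow {α p : ℝ} (hα : 0 < α) (hαp : α ≤ p)
    (hαq : α ≤ 1 - p) {c r : ℕ} (h : 2 ^ (c + 1) * logb 2 (1 / α) ≤ r) :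
    (2 : ℝ) ^ ((r : ℝ) / 2) ≤ 2 ^ r * (p * (1 - p) ^ (2 ^ c - 1)) := by
  refine (two_rpow_half_le_two_pow_mul_pow hα h).trans ?_
  have hp : 0 ≤ p := hα.le.trans hαp
  rw [← mul_pow_sub_one (pow_ne_zero c two_ne_zero)]
  gcongr

end Estimates

theorem stmt9_general (α : ℝ) (hα0 : 0 < α) (c : ℕ)
    (r k : ℕ) (hcr : c ≤ r)
    (hk1 : α * 2 ^ r ≤ (k : ℝ)) (hk2 : (k : ℝ) ≤ (1 - α) * 2 ^ r)
    (hcbound : (c : ℝ) ≤ Real.logb 2 r - Real.logb 2 (Real.logb 2 (1 / α)) - 1) :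
    ((Finset.univ.filter fun R : Finset (Fin r → Bool) =>
        R.card = k ∧
        ¬ ∃ (b : Fin (r - c) → Bool) (s : Fin c → Bool),
            ∀ x : Fin c → Bool,
              (emb r c hcr b s x ∈ R ↔ x = fun _ => true)).card : ℝ)
      ≤ (2 : ℝ) ^ (((r : ℝ) + 1) / 2) * Real.exp (-(2 : ℝ) ^ ((r : ℝ) / 2)) *
        ((Finset.univ.filter fun R : Finset (Fin r → Bool) => R.card = k).card : ℝ) := by
  set p : ℝ := k / 2 ^ r
  have hαp : α ≤ p := (le_div_iff₀ (by positivity)).2 hk1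
  have hαq : α ≤ 1 - p := by linarith [(div_le_iff₀ (by positivity : (0 : ℝ) < 2 ^ r)).2 hk2]
  have hL : 1 ≤ logb 2 (1 / α) := by
    rw [le_logb_iff_rpow_le one_lt_two (by positivity), rpow_one, le_div_iff₀ hα0]
    linarith
  have hrc := two_pow_succ_mul_le_of_le_logb_sub hL hcbound
  have hr : 2 ≤ r := by
    have : (2 : ℝ) * 1 ≤ 2 ^ (c + 1) * logb 2 (1 / α) :=
      mul_le_mul (le_self_pow₀ one_le_two c.succ_ne_zero) hL zero_le_one (by positivity)
    exact_mod_cast (by linarith : (2 : ℝ) ≤ r)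
  have h2r : (0 : ℝ) < 2 ^ r := by positivity
  have hk0 : 0 < k := by exact_mod_cast (show (0 : ℝ) < k by nlinarith)
  have hkr : k < 2 ^ r := by exact_mod_cast (show (k : ℝ) < 2 ^ r by nlinarith)
  have hp : 0 < p := hα0.trans_le hαp
  have hq : 0 < 1 - p := hα0.trans_le hαq
  have hw : 0 < p ^ k * (1 - p) ^ (2 ^ r - k) := by positivity
  have hexp := two_rpow_half_le_two_pow_mul_mul_pow hα0 hαp hαq hrc
  have hbad := (card_not_hasAndProjection_mul_le_exp hcr k hp.le (by linarith)).trans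
    (exp_le_exp.2 (neg_le_neg hexp))
  have hall := one_div_two_rpow_le_card_mul_pow_mul_pow hr hk0 hkr
  rw [div_le_iff₀ (by positivity)] at hall
  calc _ ≤ exp (-2 ^ ((r : ℝ) / 2)) / (p ^ k * (1 - p) ^ (2 ^ r - k)) := by
        rw [le_div_iff₀ hw]
        -- the two filters differ only in their decidability instances
        convert hbad using 3
        congr!
    _ ≤ _ := by
        rw [div_le_iff₀ hw]
        exact (le_mul_of_one_le_right (exp_pos _).le hall).trans_eq (by ring)

/-- Fix `α ∈ (0,1/2)` and `c ≥ 1` with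
`c ≤ log₂ r − log₂ log₂ (1/α) − 1`.  Among all relations `R ⊆ {0,1}^r` of cardinality
`k ∈ [α·2^r, (1−α)·2^r]`, the fraction of those admitting **no** projection
`R(b_1,…,b_{r−c},ℓ_1,…,ℓ_c) = AND_c = {1^c}` is at most
`2^{(r+1)/2}·exp(−2^{r/2})`, i.e. the property holds with probability `1 − o(1)`. -/
theorem stmt9 (α : ℝ) (hα0 : 0 < α) (hα2 : α < 1 / 2) (c : ℕ) (hc : 1 ≤ c)
    (r k : ℕ) (hcr : c ≤ r)
    (hk1 : α * 2 ^ r ≤ (k : ℝ)) (hk2 : (k : ℝ) ≤ (1 - α) * 2 ^ r)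
    (hcbound : (c : ℝ) ≤ Real.logb 2 r - Real.logb 2 (Real.logb 2 (1 / α)) - 1) :
    ((Finset.univ.filter fun R : Finset (Fin r → Bool) =>
        R.card = k ∧
        ¬ ∃ (b : Fin (r - c) → Bool) (s : Fin c → Bool),
            ∀ x : Fin c → Bool,
              (emb r c hcr b s x ∈ R ↔ x = fun _ => true)).card : ℝ)
      ≤ (2 : ℝ) ^ (((r : ℝ) + 1) / 2) * Real.exp (-(2 : ℝ) ^ ((r : ℝ) / 2)) *
        ((Finset.univ.filter fun R : Finset (Fin r → Bool) => R.card = k).card : ℝ) :=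
  stmt9_general α hα0 c r k hcr hk1 hk2 hcbound
end

section
/- Let W ⊆ ℂ^4 be a linear subspace of dimension at least 3 such that every w ∈ W is singular (i.e., w(00)w(11) = w(01)w(10)). Then a contradiction arises: no such subspace exists. Equivalently, if every vector in span(M) of a PSD matrix M ∈ ℂ^{4×4} is singular, then rank(M) ≤ 2, and moreover M = M_1 ⊗ M_2 for some PSD M_1, M_2 ∈ ℂ^{2×2} with at least one of them of rank ≤ 1. -/
open scoped ComplexOrder Kronecker
open Matrix

/-!
A singular vector of `K² ⊗ K²` is a simple tensor `a ⊗ c`, and by Cauchy–Binet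
`det (a ⊗ c + a' ⊗ c') = det [a a'] * det [c c']`. So any two elements of a subspace of
singular vectors have parallel first factors or parallel second factors; since parallelism
of nonzero vectors is transitive, the whole subspace lies in `a ⊗ K²` or in `K² ⊗ c`, both
of dimension 2. For a PSD matrix `M` whose columns lie in `a ⊗ K²`, Hermitian symmetry
carries the factor `a` over to the rows, so `M = (b b*) ⊗ M₂` with `b` proportional to `a`
(and symmetrically in the other case).
-/

namespace SimpleTensor

variable {K : Type*} [Field K] {m n : Type*}

def tensorₗ : (m → K) →ₗ[K] (n → K) →ₗ[K] (m × n → K) :=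
  LinearMap.mk₂ K (fun a c p => a p.1 * c p.2)
    (fun _ _ _ => funext fun _ => add_mul _ _ _)
    (fun _ _ _ => funext fun _ => mul_assoc _ _ _)
    (fun _ _ _ => funext fun _ => mul_add _ _ _)
    (fun _ _ _ => funext fun _ => mul_left_comm _ _ _)

@[simp]
theorem tensorₗ_apply (a : m → K) (c : n → K) (p : m × n) : tensorₗ a c p = a p.1 * c p.2 :=
  rfl

theorem apply_eq_div_mul_of_mem_range_tensorₗ {a : m → K} {i₀ : m} (hi₀ : a i₀ ≠ 0)
    {v : m × n → K} (hv : v ∈ LinearMap.range (tensorₗ a)) (i : m) (k : n) :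
    v (i, k) = a i / a i₀ * v (i₀, k) := by
  obtain ⟨c, rfl⟩ := hv
  field_simp
  simp only [tensorₗ_apply]
  ring

theorem apply_eq_div_mul_of_mem_range_flip_tensorₗ {c : n → K} {k₀ : n} (hk₀ : c k₀ ≠ 0)
    {v : m × n → K} (hv : v ∈ LinearMap.range (tensorₗ.flip c)) (i : m) (k : n) :
    v (i, k) = c k / c k₀ * v (i, k₀) := by
  obtain ⟨a, rfl⟩ := hv
  field_simp
  simp only [LinearMap.flip_apply, tensorₗ_apply]
  ring

theorem finrank_range_tensorₗ_le [Fintype n] (a : m → K) :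
    Module.finrank K (LinearMap.range (tensorₗ a : (n → K) →ₗ[K] _)) ≤ Fintype.card n :=
  (LinearMap.finrank_range_le _).trans_eq (Module.finrank_fintype_fun_eq_card K)

theorem finrank_range_flip_tensorₗ_le [Fintype m] (c : n → K) :
    Module.finrank K (LinearMap.range ((tensorₗ : (m → K) →ₗ[K] _).flip c)) ≤ Fintype.card m :=
  (LinearMap.finrank_range_le _).trans_eq (Module.finrank_fintype_fun_eq_card K)

def cross (x y : Fin 2 → K) : K := x 0 * y 1 - x 1 * y 0

theorem cross_smul_eq (x y z : Fin 2 → K) :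
    cross x z • y = cross x y • z + cross y z • x := by
  ext k
  fin_cases k <;> simp [cross] <;> ring

theorem cross_swap (x y : Fin 2 → K) : cross y x = -cross x y := by
  simp only [cross]
  ring

theorem cross_eq_zero_trans {x y z : Fin 2 → K} (hxy : cross x y = 0) (hyz : cross y z = 0)
    (hy : y ≠ 0) : cross x z = 0 := by
  have h := cross_smul_eq x y z
  rw [hxy, hyz, zero_smul, zero_smul, add_zero, smul_eq_zero] at h
  exact h.resolve_right hy

theorem exists_eq_smul_of_cross_eq_zero {x y : Fin 2 → K} (hx : x ≠ 0) (h : cross x y = 0) :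
    ∃ t : K, y = t • x := by
  obtain ⟨j, hj⟩ := Function.ne_iff.mp hx
  refine ⟨y j / x j, funext fun k => ?_⟩
  simp only [cross] at h
  fin_cases j <;> fin_cases k <;> simp at hj ⊢ <;> field_simp <;>
    first | linear_combination h | linear_combination -h


def IsSingular (w : Fin 2 × Fin 2 → K) : Prop :=
  w (0, 0) * w (1, 1) = w (0, 1) * w (1, 0)

theorem exists_eq_tensorₗ_of_isSingular {w : Fin 2 × Fin 2 → K} (hw : IsSingular w) :
    ∃ a c, w = tensorₗ a c := by
  set r : Fin 2 → Fin 2 → K := fun i k => w (i, k)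
  have hr : cross (r 0) (r 1) = 0 := sub_eq_zero.mpr hw
  by_cases h₀ : r 0 = 0
  · refine ⟨![0, 1], r 1, funext fun ⟨i, k⟩ => ?_⟩
    fin_cases i
    · simpa using congrFun h₀ k
    · simp [r]
  · obtain ⟨t, ht⟩ := exists_eq_smul_of_cross_eq_zero h₀ hr
    refine ⟨![1, t], r 0, funext fun ⟨i, k⟩ => ?_⟩
    fin_cases i
    · simp [r]
    · simpa using congrFun ht k

theorem cross_eq_zero_or_of_isSingular_add {a a' c c' : Fin 2 → K}
    (h : IsSingular (tensorₗ a c + tensorₗ a' c')) : cross a a' = 0 ∨ cross c c' = 0 := by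
  refine mul_eq_zero.mp ?_
  simp only [IsSingular, Pi.add_apply, tensorₗ_apply] at h
  simp only [cross]
  linear_combination h

theorem tensorₗ_mem_range_of_cross_eq_zero {a₀ a : Fin 2 → K} (ha₀ : a₀ ≠ 0)
    (h : cross a₀ a = 0) (c : Fin 2 → K) : tensorₗ a c ∈ LinearMap.range (tensorₗ a₀) := by
  obtain ⟨t, rfl⟩ := exists_eq_smul_of_cross_eq_zero ha₀ h
  exact ⟨t • c, by simp⟩

theorem tensorₗ_mem_range_flip_of_cross_eq_zero {c₀ c : Fin 2 → K} (hc₀ : c₀ ≠ 0)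
    (h : cross c₀ c = 0) (a : Fin 2 → K) : tensorₗ a c ∈ LinearMap.range (tensorₗ.flip c₀) := by
  obtain ⟨t, rfl⟩ := exists_eq_smul_of_cross_eq_zero hc₀ h
  exact ⟨t • a, by simp⟩


theorem exists_le_range_tensorₗ_of_isSingular (W : Submodule K (Fin 2 × Fin 2 → K))
    (hW : ∀ w ∈ W, IsSingular w) :
    (∃ a ≠ 0, W ≤ LinearMap.range (tensorₗ a)) ∨ ∃ c ≠ 0, W ≤ LinearMap.range (tensorₗ.flip c) := by
  rcases eq_or_ne W ⊥ with rfl | hW₀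
  · exact .inl ⟨Pi.single 0 1, by simp, bot_le⟩
  obtain ⟨w₀, hw₀, hw₀_ne⟩ := Submodule.exists_mem_ne_zero_of_ne_bot hW₀
  obtain ⟨a₀, c₀, rfl⟩ := exists_eq_tensorₗ_of_isSingular (hW _ hw₀)
  have ha₀ : a₀ ≠ 0 := by rintro rfl; simp at hw₀_ne
  have hc₀ : c₀ ≠ 0 := by rintro rfl; simp at hw₀_ne
  by_contra! h
  obtain ⟨u, hu, hu_not⟩ := SetLike.not_le_iff_exists.mp (h.1 a₀ ha₀)
  obtain ⟨w, hw, hw_not⟩ := SetLike.not_le_iff_exists.mp (h.2 c₀ hc₀)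
  obtain ⟨au, cu, rfl⟩ := exists_eq_tensorₗ_of_isSingular (hW _ hu)
  obtain ⟨aw, cw, rfl⟩ := exists_eq_tensorₗ_of_isSingular (hW _ hw)
  have hau : cross a₀ au ≠ 0 := fun h ↦ hu_not (tensorₗ_mem_range_of_cross_eq_zero ha₀ h cu)
  have hcw : cross c₀ cw ≠ 0 := fun h ↦ hw_not (tensorₗ_mem_range_flip_of_cross_eq_zero hc₀ h aw)
  have hcu : cu ≠ 0 := by rintro rfl; simp at hu_not
  have haw : aw ≠ 0 := by rintro rfl; simp at hw_not
  have hcu₀ : cross c₀ cu = 0 :=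
    (cross_eq_zero_or_of_isSingular_add (hW _ (W.add_mem hw₀ hu))).resolve_left hau
  have haw₀ : cross a₀ aw = 0 :=
    (cross_eq_zero_or_of_isSingular_add (hW _ (W.add_mem hw₀ hw))).resolve_right hcw
  rcases cross_eq_zero_or_of_isSingular_add (hW _ (W.add_mem hw hu)) with h | h
  · exact hau (cross_eq_zero_trans haw₀ h haw)
  · exact hcw (cross_eq_zero_trans hcu₀ (by rw [cross_swap, h, neg_zero]) hcu)


theorem finrank_le_two_of_isSingular (W : Submodule K (Fin 2 × Fin 2 → K))
    (hW : ∀ w ∈ W, IsSingular w) : Module.finrank K W ≤ 2 := by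
  rcases exists_le_range_tensorₗ_of_isSingular W hW with ⟨a, -, hle⟩ | ⟨c, -, hle⟩
  · simpa using (Submodule.finrank_mono hle).trans (finrank_range_tensorₗ_le a)
  · simpa using (Submodule.finrank_mono hle).trans (finrank_range_flip_tensorₗ_le c)

end SimpleTensor

namespace Matrix.IsHermitian

variable {R : Type*} [CommSemiring R] [StarRing R] {m n : Type*}

theorem eq_vecMulVec_kronecker {M : Matrix (m × n) (m × n) R} (hM : M.IsHermitian)
    (b : m → R) (i₀ : m) (hb : ∀ i k q, M (i, k) q = b i * M (i₀, k) q) :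
    M = vecMulVec b (star b) ⊗ₖ M.submatrix (Prod.mk i₀) (Prod.mk i₀) := by
  ext ⟨i, k⟩ ⟨j, l⟩
  have hrow : M (i₀, k) (j, l) = star (b j) * M (i₀, k) (i₀, l) := by
    rw [← hM.apply _ (j, l), hb, star_mul', hM.apply]
  simp only [kroneckerMap_apply, vecMulVec_apply, submatrix_apply, Pi.star_apply]
  rw [hb, hrow, mul_assoc]

theorem eq_kronecker_vecMulVec {M : Matrix (m × n) (m × n) R} (hM : M.IsHermitian)
    (b : n → R) (k₀ : n) (hb : ∀ i k q, M (i, k) q = b k * M (i, k₀) q) :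
    M = M.submatrix (·, k₀) (·, k₀) ⊗ₖ vecMulVec b (star b) := by
  ext ⟨i, k⟩ ⟨j, l⟩
  have hrow : M (i, k₀) (j, l) = star (b l) * M (i, k₀) (j, k₀) := by
    rw [← hM.apply _ (j, l), hb, star_mul', hM.apply]
  simp only [kroneckerMap_apply, vecMulVec_apply, submatrix_apply, Pi.star_apply]
  rw [hb, hrow]
  ring

end Matrix.IsHermitian

open SimpleTensor

/-- (a) No linear subspace of `ℂ^4 ≅ ℂ^{2×2}` of dimension `≥ 3` consists
entirely of singular vectors (`w(00)w(11) = w(01)w(10)`); i.e. every subspace of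
singular vectors has dimension at most 2.  (b) Consequently, if every vector in the
column span of a PSD matrix `M ∈ ℂ^{4×4}` is singular, then `rank M ≤ 2`, and moreover
`M = M₁ ⊗ M₂` for PSD `M₁, M₂ ∈ ℂ^{2×2}` with at least one of them of rank `≤ 1`. -/
theorem stmt13 :
    (∀ W : Submodule ℂ ((Fin 2 × Fin 2) → ℂ),
      (∀ w ∈ W, w (0, 0) * w (1, 1) = w (0, 1) * w (1, 0)) →
      Module.finrank ℂ W ≤ 2) ∧
    (∀ M : Matrix (Fin 2 × Fin 2) (Fin 2 × Fin 2) ℂ, M.PosSemidef →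
      (∀ u ∈ Set.range M.mulVec, u (0, 0) * u (1, 1) = u (0, 1) * u (1, 0)) →
      M.rank ≤ 2 ∧
        ∃ M1 M2 : Matrix (Fin 2) (Fin 2) ℂ,
          M1.PosSemidef ∧ M2.PosSemidef ∧ (M1.rank ≤ 1 ∨ M2.rank ≤ 1) ∧
          M = M1 ⊗ₖ M2) := by
  refine ⟨finrank_le_two_of_isSingular, fun M hM hsing => ?_⟩
  have hW : ∀ w ∈ LinearMap.range M.mulVecLin, IsSingular w := by
    rintro _ ⟨x, rfl⟩
    exact hsing _ ⟨x, rfl⟩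
  have hcol : ∀ q, M.col q ∈ LinearMap.range M.mulVecLin := fun q => ⟨Pi.single q 1, by simp⟩
  refine ⟨finrank_le_two_of_isSingular _ hW, ?_⟩
  rcases exists_le_range_tensorₗ_of_isSingular _ hW with ⟨a, ha, hle⟩ | ⟨c, hc, hle⟩
  · obtain ⟨i₀, hi₀⟩ := Function.ne_iff.mp ha
    exact ⟨_, _, posSemidef_vecMulVec_self_star _, hM.submatrix _, .inl (rank_vecMulVec_le _ _),
      hM.isHermitian.eq_vecMulVec_kronecker _ i₀ fun i k q =>
        apply_eq_div_mul_of_mem_range_tensorₗ hi₀ (hle (hcol q)) i k⟩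
  · obtain ⟨k₀, hk₀⟩ := Function.ne_iff.mp hc
    exact ⟨_, _, hM.submatrix _, posSemidef_vecMulVec_self_star _, .inr (rank_vecMulVec_le _ _),
      hM.isHermitian.eq_kronecker_vecMulVec _ k₀ fun i k q =>
        apply_eq_div_mul_of_mem_range_flip_tensorₗ hk₀ (hle (hcol q)) i k⟩
end

section
/- Consider the linear map F : A_k × A_k → ℂ^{(k−1)×k} defined on pairs of k×k complex anti-symmetric matrices (K_0, K_1) by F(K_0, K_1) = A K_0 + B K_1, where A ∈ ℂ^{(k−1)×k} is the identity with last row deleted (A = [Id_{k−1} | 0]) and B ∈ ℂ^{(k−1)×k} is the identity with first row deleted (B = [0 | Id_{k−1}]). Then F is a linear isomorphism: the domain and codomain both have dimension k(k−1), and F is injective. -/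
/-!
A pair `(K₀, K₁)` in the kernel satisfies `K₀ i j = -K₁ (i+1) j`; combined with skew-symmetry
this expresses the entries on the `d`-th super-diagonal of `K₀` and `K₁` through those on the
`(d-1)`-st, so all of them vanish by induction on `d`, starting from the zero diagonal.
Bijectivity then follows by counting dimensions: reading `M` above the diagonal into one skew
matrix and below it (shifted down by one row) into another embeds `ℂ^{(k-1)×k}` linearly into
the domain.
-/

open Matrix
/-- `F (K₀, K₁) = A K₀ + B K₁` where `A = [Id_{k-1} | 0]` deletes the last row and
`B = [0 | Id_{k-1}]` deletes the first row:
`F (K₀, K₁) i j = (K₀) i j + (K₁) (i+1) j` for `i : Fin (k-1)`. -/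
def rowShiftSum (k : ℕ) (K : Matrix (Fin k) (Fin k) ℂ × Matrix (Fin k) (Fin k) ℂ) :
    Matrix (Fin (k - 1)) (Fin k) ℂ :=
  Matrix.of fun i j =>
    K.1 ⟨(i : ℕ), by have := i.isLt; omega⟩ j +
    K.2 ⟨(i : ℕ) + 1, by have := i.isLt; omega⟩ j

section SkewSymmetric

variable (n R : Type*) [CommRing R]

def skewSymmetricSubmodule : Submodule R (Matrix n n R) where
  carrier := {A | Aᵀ = -A}
  add_mem' {A B} hA hB := by
    simp only [Set.mem_ofPred_eq, transpose_add, neg_add] at *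
    rw [hA, hB]
  zero_mem' := by simp
  smul_mem' c A hA := by
    simp only [Set.mem_ofPred_eq, transpose_smul] at *
    rw [hA, smul_neg]

variable {n R}

theorem apply_eq_neg_of_transpose_eq_neg {A : Matrix n n R} (hA : Aᵀ = -A) (i j : n) :
    A i j = -A j i := by
  simpa using congr_fun₂ hA j i

theorem apply_self_eq_zero_of_transpose_eq_neg [IsAddTorsionFree R] {A : Matrix n n R}
    (hA : Aᵀ = -A) (i : n) : A i i = 0 :=
  self_eq_neg.mp (apply_eq_neg_of_transpose_eq_neg hA i i)

variable [LinearOrder n]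

def skewOfUpper : (n → n → R) →ₗ[R] skewSymmetricSubmodule n R where
  toFun f := ⟨of fun i j => if i < j then f i j else if j < i then -f j i else 0, by
    ext i j
    simp only [transpose_apply, of_apply, Matrix.neg_apply]
    split_ifs <;> first | (exfalso; order) | simp⟩
  map_add' f g := by
    ext i j
    simp only [of_apply, Submodule.coe_add, Matrix.add_apply, Pi.add_apply]
    split_ifs <;> ring
  map_smul' c f := by
    ext i j
    simp only [of_apply, SetLike.val_smul, Matrix.smul_apply, Pi.smul_apply, smul_eq_mul,
      RingHom.id_apply]
    split_ifs <;> ring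

theorem skewOfUpper_apply_of_lt (f : n → n → R) {i j : n} (h : i < j) :
    (skewOfUpper f : Matrix n n R) i j = f i j := by
  simp [skewOfUpper, h]

end SkewSymmetric

section ShiftedSum

variable {R : Type*} [CommRing R] {k : ℕ}

theorem eq_zero_of_add_shift_eq_zero [IsAddTorsionFree R] {K₀ K₁ : Matrix (Fin k) (Fin k) R}
    (h₀ : K₀ᵀ = -K₀) (h₁ : K₁ᵀ = -K₁)
    (h : ∀ i i' j : Fin k, (i' : ℕ) = i + 1 → K₀ i j + K₁ i' j = 0) : K₀ = 0 ∧ K₁ = 0 := by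
  have diagonal : ∀ d (i j : Fin k), (j : ℕ) = i + d → K₀ i j = 0 ∧ K₁ i j = 0 := by
    intro d
    induction d with
    | zero =>
      intro i j hij
      obtain rfl : j = i := Fin.ext hij
      exact ⟨apply_self_eq_zero_of_transpose_eq_neg h₀ j,
        apply_self_eq_zero_of_transpose_eq_neg h₁ j⟩
    | succ s ih =>
      intro i j hij
      let i' : Fin k := ⟨i + 1, by omega⟩
      let m : Fin k := ⟨i + s, by omega⟩
      have hK₀ : K₀ i j = 0 := by
        simpa [(ih i' j (by simp [i']; omega)).2] using h i i' j rfl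
      have hK₀' : K₀ m i = 0 := by
        rw [apply_eq_neg_of_transpose_eq_neg h₀, (ih i m rfl).1, neg_zero]
      have hK₁ : K₁ j i = 0 := by
        simpa [hK₀'] using h m j i (by simp [m]; omega)
      exact ⟨hK₀, by rw [apply_eq_neg_of_transpose_eq_neg h₁, hK₁, neg_zero]⟩
  have entry : ∀ i j : Fin k, K₀ i j = 0 ∧ K₁ i j = 0 := by
    intro i j
    rcases le_total i j with hij | hij
    · exact diagonal (j - i) i j (by omega)
    · obtain ⟨hK₀, hK₁⟩ := diagonal (i - j) j i (by omega)
      rw [apply_eq_neg_of_transpose_eq_neg h₀, apply_eq_neg_of_transpose_eq_neg h₁, hK₀, hK₁]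
      simp
  exact ⟨ext fun i j => (entry i j).1, ext fun i j => (entry i j).2⟩

variable (R k)

def upperLowerSkew :
    Matrix (Fin (k - 1)) (Fin k) R →ₗ[R]
      skewSymmetricSubmodule (Fin k) R × skewSymmetricSubmodule (Fin k) R where
  toFun M :=
    (skewOfUpper fun i j => if h : i < j then M ⟨i, by omega⟩ j else 0,
     skewOfUpper fun i j => if h : i < j then M ⟨j - 1, by omega⟩ i else 0)
  map_add' M N := by
    simp only [← map_add, Prod.mk_add_mk]
    congr <;> ext i j <;> by_cases h : i < j <;> simp [h]
  map_smul' c M := by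
    simp only [← map_smul, Prod.smul_mk, RingHom.id_apply]
    congr <;> ext i j <;> by_cases h : i < j <;> simp [h]

variable {R k}

theorem upperLowerSkew_injective : Function.Injective (upperLowerSkew R k) := by
  refine (injective_iff_map_eq_zero _).mpr fun M hM => ?_
  ext r c
  rcases lt_or_ge (r : ℕ) c with hrc | hcr
  · have hlt : (⟨r, by omega⟩ : Fin k) < c := hrc
    have := congr_fun₂ (congrArg (fun K => (K.1 : Matrix (Fin k) (Fin k) R)) hM) ⟨r, by omega⟩ c
    simpa [upperLowerSkew, skewOfUpper_apply_of_lt _ hlt, hlt] using this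
  · have hlt : c < (⟨r + 1, by omega⟩ : Fin k) := by simp [Fin.lt_def]; omega
    have := congr_fun₂ (congrArg (fun K => (K.2 : Matrix (Fin k) (Fin k) R)) hM)
      c ⟨r + 1, by omega⟩
    simpa [upperLowerSkew, skewOfUpper_apply_of_lt _ hlt, hlt] using this

end ShiftedSum

def rowShiftSumLinear (k : ℕ) :
    skewSymmetricSubmodule (Fin k) ℂ × skewSymmetricSubmodule (Fin k) ℂ →ₗ[ℂ]
      Matrix (Fin (k - 1)) (Fin k) ℂ where
  toFun K := rowShiftSum k (K.1, K.2)
  map_add' K L := by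
    ext i j
    simp only [rowShiftSum, of_apply, Prod.fst_add, Prod.snd_add, Submodule.coe_add,
      Matrix.add_apply]
    ring
  map_smul' c K := by
    ext i j
    simp [rowShiftSum, mul_add]

theorem rowShiftSumLinear_injective (k : ℕ) : Function.Injective (rowShiftSumLinear k) := by
  refine (injective_iff_map_eq_zero _).mpr fun ⟨⟨K₀, h₀⟩, ⟨K₁, h₁⟩⟩ hK => ?_
  have shift : ∀ i i' j : Fin k, (i' : ℕ) = i + 1 → K₀ i j + K₁ i' j = 0 := by
    intro i i' j hi
    rw [show i' = ⟨i + 1, by omega⟩ from Fin.ext hi]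
    simpa [rowShiftSumLinear, rowShiftSum] using congr_fun₂ hK ⟨i, by omega⟩ j
  obtain ⟨rfl, rfl⟩ := eq_zero_of_add_shift_eq_zero h₀ h₁ shift
  rfl

theorem stmt15_general (k : ℕ) :
    Module.finrank ℂ (Matrix (Fin (k - 1)) (Fin k) ℂ) = k * (k - 1) ∧
    Function.Bijective
      (fun K : {A : Matrix (Fin k) (Fin k) ℂ // Aᵀ = -A} ×
               {A : Matrix (Fin k) (Fin k) ℂ // Aᵀ = -A} =>
        rowShiftSum k (K.1.1, K.2.1)) := by
  have hF := rowShiftSumLinear_injective k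
  have hdim := le_antisymm (LinearMap.finrank_le_finrank_of_injective hF)
    (LinearMap.finrank_le_finrank_of_injective (upperLowerSkew_injective (R := ℂ) (k := k)))
  exact ⟨by simp [Module.finrank_matrix, mul_comm], hF,
    (LinearMap.injective_iff_surjective_of_finrank_eq_finrank hdim).mp hF⟩

/-- The linear map `F : A_k × A_k → ℂ^{(k-1)×k}`,
`F(K₀,K₁) = A K₀ + B K₁` (with `A` the identity with the last row deleted and `B` the
identity with the first row deleted), defined on pairs of anti-symmetric `k×k` complex
matrices, is a linear isomorphism: the codomain has dimension `k(k-1)` (as does the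
domain) and `F` is injective, hence bijective. -/
theorem stmt15 (k : ℕ) (hk : 1 ≤ k) :
    Module.finrank ℂ (Matrix (Fin (k - 1)) (Fin k) ℂ) = k * (k - 1) ∧
    Function.Bijective
      (fun K : {A : Matrix (Fin k) (Fin k) ℂ // Aᵀ = -A} ×
               {A : Matrix (Fin k) (Fin k) ℂ // Aᵀ = -A} =>
        rowShiftSum k (K.1.1, K.2.1)) :=
  stmt15_general k
end
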